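/- arXiv:1812.09781 — 2 statements merged into one kernel-verified Lean document; each statement's English description precedes it below -/
import Mathlib

section
/- Let r₁, r₂ ≥ 2 be real numbers with r₁ > max{r₂, 2(r₂−1)}, let a > 0 and b > 0 be real constants, let c_f > 0 and c_g < 0 be real constants, let f : ℝ → ℝ be a function and let g : ℝ → ℝ be differentiable. Assume that f(s)·s/|s|^{r₁} converges to c_f and that g′(s)/|s|^{r₂−2} converges to (r₂−1)·c_g as |s| → ∞. Then the quotient (f(s)·s + a·g(s)·s − b·(g′(s)·s + g(s))²)/|s|^{r₁} converges to c_f as |s| → ∞; in particular, liminf_{|s|→∞} (f(s)·s + a·g(s)·s − b·(g′(s)·s + g(s))²)/|s|^{r₁} > 0. -/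
open Filter Topology Asymptotics

/-! The hypothesis on `g'` gives `g' = O(|s|^(r₂-2))`, and the mean value inequality on `[R, s]`
upgrades this to `g = O(|s|^(r₂-1))`. Hence `a g(s) s = O(|s|^r₂)` and
`(g'(s) s + g(s))² = O(|s|^(2(r₂-1)))`, both `o(|s|^r₁)` because `r₁ > max r₂ (2(r₂-1))`;
after division by `|s|^r₁` only the bulk term `f(s) s / |s|^r₁ → c_f` survives. -/

section GrowthFromDerivative

variable {E : Type*} [NormedAddCommGroup E] [NormedSpace ℝ E] {g : ℝ → E} {p : ℝ}

theorem isBigO_atTop_abs_rpow_add_one_of_deriv (hg : Differentiable ℝ g) (hp : 0 ≤ p)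
    (h : deriv g =O[atTop] fun x => |x| ^ p) : g =O[atTop] fun x => |x| ^ (p + 1) := by
  obtain ⟨C, hC0, hC⟩ := h.exists_pos
  obtain ⟨R, hR⟩ := eventually_atTop.1 (hC.bound.and (eventually_ge_atTop 1))
  have hR1 : 1 ≤ R := (hR R le_rfl).2
  refine IsBigO.of_bound (‖g R‖ + C) ?_
  filter_upwards [eventually_ge_atTop R] with x hRx
  have hx0 : 0 < x := by linarith
  have hmvt : ‖g x - g R‖ ≤ C * x ^ p * (x - R) := by
    refine norm_image_sub_le_of_norm_deriv_le_segment'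
      (fun y _ => (hg y).hasDerivAt.hasDerivWithinAt) (fun y hy => ?_) x ⟨hRx, le_rfl⟩
    have hy0 : 0 ≤ y := by linarith [hy.1]
    calc ‖deriv g y‖ ≤ C * ‖|y| ^ p‖ := (hR y hy.1).1
      _ = C * y ^ p := by rw [Real.norm_of_nonneg (by positivity), abs_of_nonneg hy0]
      _ ≤ C * x ^ p := by gcongr; exact hy.2.le
  have hgR : ‖g R‖ ≤ ‖g R‖ * x ^ (p + 1) :=
    le_mul_of_one_le_right (norm_nonneg _) (Real.one_le_rpow (by linarith) (by linarith))
  rw [Real.norm_of_nonneg (by positivity), abs_of_pos hx0, Real.rpow_add_one hx0.ne']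
  calc ‖g x‖ ≤ ‖g R‖ + ‖g x - g R‖ := norm_le_insert' _ _
    _ ≤ ‖g R‖ * x ^ (p + 1) + C * x ^ p * x :=
        add_le_add hgR (hmvt.trans (by gcongr; linarith))
    _ = (‖g R‖ + C) * (x ^ p * x) := by rw [Real.rpow_add_one hx0.ne']; ring

theorem isBigO_cocompact_abs_rpow_add_one_of_deriv (hg : Differentiable ℝ g) (hp : 0 ≤ p)
    (h : deriv g =O[cocompact ℝ] fun x => |x| ^ p) :
    g =O[cocompact ℝ] fun x => |x| ^ (p + 1) := by
  rw [cocompact_eq_atBot_atTop] at h ⊢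
  refine IsBigO.sup ?_ (isBigO_atTop_abs_rpow_add_one_of_deriv hg hp (h.mono le_sup_right))
  have hneg : (deriv fun x => g (-x)) =O[atTop] fun x => |x| ^ p := by
    rw [funext (deriv_comp_neg g)]
    simpa [Function.comp_def] using
      ((h.mono le_sup_left).comp_tendsto tendsto_neg_atTop_atBot).neg_left
  simpa [Function.comp_def] using (isBigO_atTop_abs_rpow_add_one_of_deriv
    (hg.comp differentiable_neg) hp hneg).comp_tendsto tendsto_neg_atBot_atTop

end GrowthFromDerivative

theorem Asymptotics.IsBigO.mul_abs_rpow {l : Filter ℝ} {f g : ℝ → ℝ} {p q r : ℝ}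
    (hf : f =O[l] fun x => |x| ^ p) (hg : g =O[l] fun x => |x| ^ q)
    (hpqr : p + q = r) (hr : r ≠ 0) :
    (fun x => f x * g x) =O[l] fun x => |x| ^ r :=
  (hf.mul hg).congr_right fun x => by rw [← hpqr, Real.rpow_add' (abs_nonneg x) (hpqr ▸ hr)]

theorem isLittleO_cocompact_abs_rpow {p q : ℝ} (hpq : p < q) :
    (fun x : ℝ => |x| ^ p) =o[cocompact ℝ] fun x => |x| ^ q := by
  have hpos : ∀ᶠ x : ℝ in cocompact ℝ, 0 < |x| :=
    tendsto_norm_cocompact_atTop.eventually_gt_atTop 0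
  rw [isLittleO_iff_tendsto' (hpos.mono fun x hx h => absurd h (by positivity))]
  refine ((tendsto_rpow_neg_atTop (sub_pos.2 hpq)).comp tendsto_norm_cocompact_atTop).congr' ?_
  filter_upwards [hpos] with x hx
  rw [Function.comp_apply, Real.norm_eq_abs, ← Real.rpow_sub hx, neg_sub]

theorem balance_condition_dominant_bulk_general
    (r₁ r₂ : ℝ) (hr₂ : 2 ≤ r₂)
    (hdom : r₁ > max r₂ (2 * (r₂ - 1)))
    (a b : ℝ)
    (c_f c_g : ℝ) (hcf : 0 < c_f)
    (f g : ℝ → ℝ) (hg : Differentiable ℝ g)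
    (hf_lim : Tendsto (fun s => f s * s / |s| ^ r₁) (cocompact ℝ) (𝓝 c_f))
    (hg_lim : Tendsto (fun s => deriv g s / |s| ^ (r₂ - 2)) (cocompact ℝ)
      (𝓝 ((r₂ - 1) * c_g))) :
    Tendsto
      (fun s => (f s * s + a * g s * s - b * (deriv g s * s + g s) ^ 2) / |s| ^ r₁)
      (cocompact ℝ) (𝓝 c_f) ∧
    0 < Filter.liminf
      (fun s => (f s * s + a * g s * s - b * (deriv g s * s + g s) ^ 2) / |s| ^ r₁)
      (cocompact ℝ) := by
  obtain ⟨hr₂_lt, hflux_lt⟩ := max_lt_iff.1 hdom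
  have hid : (fun s : ℝ => s) =O[cocompact ℝ] fun s => |s| ^ (1 : ℝ) := by
    simpa only [Real.rpow_one] using isBigO_abs_right.2 (isBigO_refl (fun s : ℝ => s) _)
  have hg' : deriv g =O[cocompact ℝ] fun s => |s| ^ (r₂ - 2) := by
    refine isBigO_of_div_tendsto_nhds ?_ _ hg_lim
    filter_upwards [tendsto_norm_cocompact_atTop.eventually_gt_atTop 0] with s hs h
    exact absurd h (Real.rpow_pos_of_pos hs _).ne'
  have hg₀ : g =O[cocompact ℝ] fun s => |s| ^ (r₂ - 1) := by
    simpa only [show r₂ - 2 + 1 = r₂ - 1 by ring] using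
      isBigO_cocompact_abs_rpow_add_one_of_deriv hg (by linarith) hg'
  have hbdry : (fun s => a * g s * s) =o[cocompact ℝ] fun s => |s| ^ r₁ :=
    ((hg₀.const_mul_left a).mul_abs_rpow hid rfl (by linarith)).trans_isLittleO
      (isLittleO_cocompact_abs_rpow (by linarith))
  have hflux : (fun s => deriv g s * s + g s) =O[cocompact ℝ] fun s => |s| ^ (r₂ - 1) :=
    (hg'.mul_abs_rpow hid (by ring) (by linarith)).add hg₀
  have hgrad : (fun s => b * (deriv g s * s + g s) ^ 2) =o[cocompact ℝ] fun s => |s| ^ r₁ := by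
    simpa only [sq] using
      ((hflux.mul_abs_rpow hflux rfl (by linarith)).const_mul_left b).trans_isLittleO
        (isLittleO_cocompact_abs_rpow (by linarith))
  have hlim : Tendsto
      (fun s => (f s * s + a * g s * s - b * (deriv g s * s + g s) ^ 2) / |s| ^ r₁)
      (cocompact ℝ) (𝓝 c_f) := by
    simpa only [add_div, sub_div, add_zero, sub_zero] using
      (hf_lim.add hbdry.tendsto_div_nhds_zero).sub hgrad.tendsto_div_nhds_zero
  exact ⟨hlim, hlim.liminf_eq ▸ hcf⟩

theorem balance_condition_dominant_bulk
    (r₁ r₂ : ℝ) (hr₁ : 2 ≤ r₁) (hr₂ : 2 ≤ r₂)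
    (hdom : r₁ > max r₂ (2 * (r₂ - 1)))
    (a b : ℝ) (ha : 0 < a) (hb : 0 < b)
    (c_f c_g : ℝ) (hcf : 0 < c_f) (hcg : c_g < 0)
    (f g : ℝ → ℝ) (hg : Differentiable ℝ g)
    (hf_lim : Tendsto (fun s => f s * s / |s| ^ r₁) (cocompact ℝ) (𝓝 c_f))
    (hg_lim : Tendsto (fun s => deriv g s / |s| ^ (r₂ - 2)) (cocompact ℝ)
      (𝓝 ((r₂ - 1) * c_g))) :
    Tendsto
      (fun s => (f s * s + a * g s * s - b * (deriv g s * s + g s) ^ 2) / |s| ^ r₁)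
      (cocompact ℝ) (𝓝 c_f) ∧
    0 < Filter.liminf
      (fun s => (f s * s + a * g s * s - b * (deriv g s * s + g s) ^ 2) / |s| ^ r₁)
      (cocompact ℝ) :=
  balance_condition_dominant_bulk_general r₁ r₂ hr₂ hdom a b c_f c_g hcf f g hg hf_lim hg_lim
end

section
/- Let r₂ > 2 be a real number and set r₁ = 2(r₂−1) (so that r₁ > r₂), let a > 0 and b > 0 be real constants, let c_f and c_g be nonzero real constants, let f : ℝ → ℝ be a function and let g : ℝ → ℝ be differentiable. Assume that f(s)·s/|s|^{r₁} converges to c_f and that g′(s)/|s|^{r₂−2} converges to (r₂−1)·c_g as |s| → ∞. If c_f > b·r₂²·c_g², then the quotient (f(s)·s + a·g(s)·s − b·(g′(s)·s + g(s))²)/|s|^{r₁} converges to c_f − b·r₂²·c_g² as |s| → ∞; in particular, liminf_{|s|→∞} (f(s)·s + a·g(s)·s − b·(g′(s)·s + g(s))²)/|s|^{r₁} > 0. -/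
/-! An `∞/∞` l'Hôpital rule at `+∞` (comparing `g` with `C • k` by monotonicity of `g - C • k`)
turns `g'(s) ~ (r₂ - 1) c_g |s|^(r₂-2)` into `g(s) ~ c_g |s|^(r₂-2) s`; at `-∞` one applies it to
`u ↦ -g(-u)`. Since `r₁ = 2(r₂ - 1)` we have `|s|^r₁ = (|s|^(r₂-2) s)²`, so the quotient splits as
`f(s)s/|s|^r₁ + a · (g(s)/(|s|^(r₂-2) s)) · (|s|^(r₂-2))⁻¹ - b (g'(s)/|s|^(r₂-2) + g(s)/(|s|^(r₂-2) s))²`,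
whose three terms tend to `c_f`, `0` and `-b (r₂ c_g)²`. -/

open Filter Topology Set

section LHopitalAtTop

variable {g k g' k' : ℝ → ℝ}

theorem eventually_div_lt_of_eventually_deriv_lt
    (hg : ∀ᶠ x in atTop, HasDerivAt g (g' x) x) (hk : ∀ᶠ x in atTop, HasDerivAt k (k' x) x)
    (hk_top : Tendsto k atTop atTop) {C C' : ℝ} (hCC' : C < C')
    (hderiv : ∀ᶠ x in atTop, g' x < C * k' x) :
    ∀ᶠ x in atTop, g x / k x < C' := by
  obtain ⟨T, hT⟩ := eventually_atTop.1 (hg.and (hk.and hderiv))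
  have hφ : ∀ x ∈ Ici T, HasDerivAt (fun t => g t - C * k t) (g' x - C * k' x) x :=
    fun x hx => (hT x hx).1.sub ((hT x hx).2.1.const_mul C)
  have hanti : AntitoneOn (fun t => g t - C * k t) (Ici T) := by
    refine antitoneOn_of_hasDerivWithinAt_nonpos (convex_Ici T) (HasDerivAt.continuousOn hφ)
      (fun x hx => (hφ x (interior_subset hx)).hasDerivWithinAt) fun x hx => ?_
    linarith [(hT x (interior_subset hx)).2.2]
  have hsmall : Tendsto (fun x => (g T - C * k T) / k x) atTop (𝓝 0) :=
    tendsto_const_nhds.div_atTop hk_top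
  filter_upwards [eventually_ge_atTop T, hk_top.eventually_gt_atTop 0,
    hsmall.eventually (gt_mem_nhds (sub_pos.2 hCC'))] with x hTx hkx hKx
  have hle : g x - C * k x ≤ g T - C * k T := hanti self_mem_Ici hTx hTx
  calc g x / k x = (g x - C * k x) / k x + C := by field_simp; ring
    _ ≤ (g T - C * k T) / k x + C := by gcongr
    _ < C' := by linarith

theorem tendsto_div_of_tendsto_deriv_div_atTop
    (hg : ∀ᶠ x in atTop, HasDerivAt g (g' x) x) (hk : ∀ᶠ x in atTop, HasDerivAt k (k' x) x)
    (hk' : ∀ᶠ x in atTop, 0 < k' x) (hk_top : Tendsto k atTop atTop) {c : ℝ}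
    (h : Tendsto (fun x => g' x / k' x) atTop (𝓝 c)) :
    Tendsto (fun x => g x / k x) atTop (𝓝 c) := by
  refine tendsto_order.2 ⟨fun c' hc' => ?_, fun c' hc' => ?_⟩
  · obtain ⟨C, hc'C, hCc⟩ := exists_between hc'
    have hneg : ∀ᶠ x in atTop, -g' x < -C * k' x := by
      filter_upwards [hk', (tendsto_order.1 h).1 C hCc] with x hkx hx
      rw [lt_div_iff₀ hkx] at hx
      linarith
    filter_upwards [eventually_div_lt_of_eventually_deriv_lt (hg.mono fun x hx => hx.neg) hk
      hk_top (neg_lt_neg hc'C) hneg] with x hx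
    rw [Pi.neg_apply, neg_div] at hx
    linarith
  · obtain ⟨C, hcC, hCc'⟩ := exists_between hc'
    refine eventually_div_lt_of_eventually_deriv_lt hg hk hk_top hCc' ?_
    filter_upwards [hk', (tendsto_order.1 h).2 C hcC] with x hkx hx
    rwa [div_lt_iff₀ hkx] at hx

end LHopitalAtTop

theorem tendsto_div_rpow_atTop_of_tendsto_deriv {g g' : ℝ → ℝ}
    (hg : ∀ᶠ x in atTop, HasDerivAt g (g' x) x) {r c : ℝ} (hr : 0 < r)
    (h : Tendsto (fun x => g' x / x ^ (r - 1)) atTop (𝓝 (r * c))) :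
    Tendsto (fun x => g x / x ^ r) atTop (𝓝 c) := by
  have hlim : Tendsto (fun x => g' x / (r * x ^ (r - 1))) atTop (𝓝 c) := by
    convert h.div_const r using 1
    · ext x
      rw [mul_comm, div_div]
    · field_simp
  exact tendsto_div_of_tendsto_deriv_div_atTop hg
    ((eventually_gt_atTop 0).mono fun x hx => Real.hasDerivAt_rpow_const (Or.inl hx.ne'))
    ((eventually_gt_atTop 0).mono fun x hx => by positivity) (tendsto_rpow_atTop hr) hlim

theorem tendsto_div_abs_rpow_mul_self_cocompact {g : ℝ → ℝ} (hg : Differentiable ℝ g)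
    {r c : ℝ} (hr : 0 < r)
    (h : Tendsto (fun s => deriv g s / |s| ^ (r - 1)) (cocompact ℝ) (𝓝 (r * c))) :
    Tendsto (fun s => g s / (|s| ^ (r - 1) * s)) (cocompact ℝ) (𝓝 c) := by
  have hpow : ∀ x : ℝ, 0 < x → |x| ^ (r - 1) * x = x ^ r := fun x hx => by
    rw [abs_of_pos hx, ← Real.rpow_add_one hx.ne', sub_add_cancel]
  rw [cocompact_eq_atBot_atTop, tendsto_sup] at h ⊢
  constructor
  · have hG : ∀ u, HasDerivAt (fun u => -g (-u)) (deriv g (-u)) u := fun u =>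
      ((hg (-u)).hasDerivAt.comp u (hasDerivAt_neg u)).neg.congr_deriv (by ring)
    rw [← map_neg_atTop, tendsto_map'_iff] at h ⊢
    refine (tendsto_div_rpow_atTop_of_tendsto_deriv (.of_forall hG) hr ?_).congr' ?_
    · refine h.1.congr' ?_
      filter_upwards [eventually_gt_atTop 0] with u hu
      simp [abs_of_pos hu]
    · filter_upwards [eventually_gt_atTop 0] with u hu
      simp [← hpow u hu, neg_div, div_neg]
  · refine (tendsto_div_rpow_atTop_of_tendsto_deriv
      (.of_forall fun x => (hg x).hasDerivAt) hr ?_).congr' ?_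
    · refine h.2.congr' ?_
      filter_upwards [eventually_gt_atTop 0] with x hx
      rw [abs_of_pos hx]
    · filter_upwards [eventually_gt_atTop 0] with x hx
      rw [hpow x hx]

theorem abs_rpow_two_mul_sub_one_eq_sq {s : ℝ} (hs : s ≠ 0) (r : ℝ) :
    |s| ^ (2 * (r - 1)) = (|s| ^ (r - 2) * s) ^ 2 := by
  rw [mul_pow, ← sq_abs s, ← Real.rpow_natCast, ← Real.rpow_natCast, ← Real.rpow_mul (abs_nonneg s),
    ← Real.rpow_add (abs_pos.2 hs)]
  congr 1
  push_cast
  ring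

theorem balance_condition_critical_case_general
    (r₁ r₂ : ℝ) (hr₂ : 2 < r₂) (hr₁ : r₁ = 2 * (r₂ - 1))
    (a b : ℝ)
    (c_f c_g : ℝ)
    (f g : ℝ → ℝ) (hg : Differentiable ℝ g)
    (hf_lim : Tendsto (fun s => f s * s / |s| ^ r₁) (cocompact ℝ) (𝓝 c_f))
    (hg_lim : Tendsto (fun s => deriv g s / |s| ^ (r₂ - 2)) (cocompact ℝ)
      (𝓝 ((r₂ - 1) * c_g)))
    (hbal : c_f > b * r₂ ^ 2 * c_g ^ 2) :
    Tendsto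
      (fun s => (f s * s + a * g s * s - b * (deriv g s * s + g s) ^ 2) / |s| ^ r₁)
      (cocompact ℝ) (𝓝 (c_f - b * r₂ ^ 2 * c_g ^ 2)) ∧
    0 < Filter.liminf
      (fun s => (f s * s + a * g s * s - b * (deriv g s * s + g s) ^ 2) / |s| ^ r₁)
      (cocompact ℝ) := by
  have hq := tendsto_div_abs_rpow_mul_self_cocompact hg (r := r₂ - 1) (c := c_g) (by linarith)
    (by rwa [sub_sub, one_add_one_eq_two])
  rw [sub_sub, one_add_one_eq_two] at hq
  have hdecay : Tendsto (fun s : ℝ => (|s| ^ (r₂ - 2))⁻¹) (cocompact ℝ) (𝓝 0) :=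
    tendsto_inv_atTop_zero.comp ((tendsto_rpow_atTop (by linarith)).comp
      (tendsto_norm_cocompact_atTop (E := ℝ)))
  have hlim := (hf_lim.add ((tendsto_const_nhds (x := a)).mul hq |>.mul hdecay)).sub
    (((hg_lim.add hq).pow 2).const_mul b)
  have hmain : Tendsto
      (fun s => (f s * s + a * g s * s - b * (deriv g s * s + g s) ^ 2) / |s| ^ r₁)
      (cocompact ℝ) (𝓝 (c_f - b * r₂ ^ 2 * c_g ^ 2)) := by
    convert hlim.congr' ?_ using 2
    · ring
    filter_upwards [(isCompact_singleton (x := (0 : ℝ))).compl_mem_cocompact] with s (hs : s ≠ 0)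
    have hA : |s| ^ (r₂ - 2) ≠ 0 := (Real.rpow_pos_of_pos (abs_pos.2 hs) _).ne'
    rw [hr₁, abs_rpow_two_mul_sub_one_eq_sq hs]
    field_simp
  exact ⟨hmain, hmain.liminf_eq ▸ by linarith⟩

theorem balance_condition_critical_case
    (r₁ r₂ : ℝ) (hr₂ : 2 < r₂) (hr₁ : r₁ = 2 * (r₂ - 1))
    (a b : ℝ) (ha : 0 < a) (hb : 0 < b)
    (c_f c_g : ℝ) (hcf : c_f ≠ 0) (hcg : c_g ≠ 0)
    (f g : ℝ → ℝ) (hg : Differentiable ℝ g)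
    (hf_lim : Tendsto (fun s => f s * s / |s| ^ r₁) (cocompact ℝ) (𝓝 c_f))
    (hg_lim : Tendsto (fun s => deriv g s / |s| ^ (r₂ - 2)) (cocompact ℝ)
      (𝓝 ((r₂ - 1) * c_g)))
    (hbal : c_f > b * r₂ ^ 2 * c_g ^ 2) :
    Tendsto
      (fun s => (f s * s + a * g s * s - b * (deriv g s * s + g s) ^ 2) / |s| ^ r₁)
      (cocompact ℝ) (𝓝 (c_f - b * r₂ ^ 2 * c_g ^ 2)) ∧
    0 < Filter.liminf
      (fun s => (f s * s + a * g s * s - b * (deriv g s * s + g s) ^ 2) / |s| ^ r₁)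
      (cocompact ℝ) :=
  balance_condition_critical_case_general r₁ r₂ hr₂ hr₁ a b c_f c_g f g hg hf_lim hg_lim hbal
end
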